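/- If B ⊆ Σⁿ is (r,r)-guaranteed, then B is (r+2, r+2)-guaranteed. -/

import Mathlib

/-- Cost structure for edit distance (formerly `Levenshtein.Cost` in Mathlib). -/
structure Levenshtein.Cost (α β δ : Type*) where
  delete : α → δ
  insert : β → δ
  substitute : α → β → δ

/-- Unit costs (formerly `Levenshtein.defaultCost` in Mathlib). -/
def Levenshtein.defaultCost {α : Type*} [DecidableEq α] : Levenshtein.Cost α α ℕ where
  delete _ := 1
  insert _ := 1
  substitute a b := if a = b then 0 else 1

/-- Row step of the dynamic program (formerly `Levenshtein.impl` in Mathlib). -/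
def Levenshtein.impl {α β δ : Type*} [AddZeroClass δ] [Min δ]
    (C : Levenshtein.Cost α β δ) (xs : List α) (y : β)
    (d : {r : List δ // 0 < r.length}) : {r : List δ // 0 < r.length} :=
  let ⟨ds, w⟩ := d
  xs.zip (ds.zip ds.tail) |>.foldr
    (init := ⟨[C.insert y + ds.getLast (List.length_pos_iff.mp w)], by simp⟩)
    (fun ⟨x, d₀, d₁⟩ ⟨r, w⟩ =>
      ⟨min (C.delete x + r[0]) (min (C.insert y + d₀) (C.substitute x y + d₁)) :: r, by simp⟩)

/-- Formerly `suffixLevenshtein` in Mathlib. -/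
def suffixLevenshtein {α β δ : Type*} [AddZeroClass δ] [Min δ]
    (C : Levenshtein.Cost α β δ) (xs : List α) (ys : List β) :
    {r : List δ // 0 < r.length} :=
  ys.foldr
    (Levenshtein.impl C xs)
    (xs.foldr (init := ⟨[0], by simp⟩) (fun a ⟨r, w⟩ => ⟨(C.delete a + r[0]) :: r, by simp⟩))

/-- Formerly `levenshtein` in Mathlib. -/
def levenshtein {α β δ : Type*} [AddZeroClass δ] [Min δ]
    (C : Levenshtein.Cost α β δ) (xs : List α) (ys : List β) : δ :=
  let ⟨r, w⟩ := suffixLevenshtein C xs ys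
  r[0]

/-- Edit (Levenshtein) distance between two length-`n` sequences over `α`. -/
def editDist {α : Type*} [DecidableEq α] {n : ℕ} (s t : Fin n → α) : ℕ :=
  levenshtein Levenshtein.defaultCost (List.ofFn s) (List.ofFn t)

/-- `B` is a `(d, r)`-guaranteed subset of `Σⁿ`: for every pair of sequences within
edit distance `d`, some sequence of `B` lies in both of their `r`-neighborhoods. -/
def IsGuaranteed {α : Type*} [DecidableEq α] {n : ℕ} (d r : ℕ)
    (B : Set (Fin n → α)) : Prop :=
  ∀ s t : Fin n → α, editDist s t ≤ d →
    ∃ v ∈ B, editDist s v ≤ r ∧ editDist t v ≤ r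

/-!
Given `s, t ∈ Σⁿ` with `edit(s, t) ≤ r + 2`, take an optimal edit script from `s` to `t`.
Since `|s| = |t|` it has as many deletions as insertions, so undoing one deletion and one
insertion, or two substitutions (or everything, when fewer than two edits are made), gives
`u ∈ Σⁿ` with `edit(s, u) ≤ edit(s, t) - 2 ≤ r` and `edit(t, u) ≤ 2`. A word `v ∈ B` within `r`
of both `s` and `u` is within `r + 2` of `t` by the triangle inequality, which is proved by
induction along the dynamic-programming recurrence of `levenshtein`.
-/

section Recurrence

variable {α β δ : Type*} [AddZeroClass δ] [Min δ] (C : Levenshtein.Cost α β δ)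

theorem Levenshtein.impl_cons_val (x : α) (xs : List α) (y : β)
    (d : {r : List δ // 0 < r.length}) (h : δ) (ds : List δ) (hd : d.1 = h :: ds)
    (w : 0 < ds.length) :
    (Levenshtein.impl C (x :: xs) y d).1 =
      min (C.delete x + (Levenshtein.impl C xs y ⟨ds, w⟩).1[0]'(Levenshtein.impl C xs y ⟨ds, w⟩).2)
        (min (C.insert y + h) (C.substitute x y + ds[0]'w)) ::
        (Levenshtein.impl C xs y ⟨ds, w⟩).1 := by
  obtain ⟨l, wl⟩ := d
  dsimp only at hd
  subst hd
  match ds, w with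
  | _ :: _, _ => rfl

theorem suffixLevenshtein_cons_left_val (x : α) (xs : List α) (ys : List β) :
    (suffixLevenshtein C (x :: xs) ys).1 =
      levenshtein C (x :: xs) ys :: (suffixLevenshtein C xs ys).1 := by
  induction ys with
  | nil => rfl
  | cons y ys ih =>
    have h := Levenshtein.impl_cons_val C x xs y _ _ _ ih (suffixLevenshtein C xs ys).2
    change (Levenshtein.impl C (x :: xs) y (suffixLevenshtein C (x :: xs) ys)).1 =
      (Levenshtein.impl C (x :: xs) y (suffixLevenshtein C (x :: xs) ys)).1[0]'
        (suffixLevenshtein C (x :: xs) (y :: ys)).2 :: _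
    simp only [h]
    rfl

@[simp] theorem levenshtein_nil_cons (y : β) (ys : List β) :
    levenshtein C [] (y :: ys) = C.insert y + levenshtein C [] ys := by
  cases ys <;> rfl

@[simp] theorem levenshtein_cons_nil (x : α) (xs : List α) :
    levenshtein C (x :: xs) [] = C.delete x + levenshtein C xs [] := rfl

@[simp] theorem levenshtein_cons_cons (x : α) (xs : List α) (y : β) (ys : List β) :
    levenshtein C (x :: xs) (y :: ys) =
      min (C.delete x + levenshtein C xs (y :: ys))
        (min (C.insert y + levenshtein C (x :: xs) ys) (C.substitute x y + levenshtein C xs ys)) := by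
  have h := Levenshtein.impl_cons_val C x xs y _ _ _
    (suffixLevenshtein_cons_left_val C x xs ys) (suffixLevenshtein C xs ys).2
  change (Levenshtein.impl C (x :: xs) y (suffixLevenshtein C (x :: xs) ys)).1[0]'_ = _
  simp only [h]
  rfl

end Recurrence

inductive EditScript {α : Type*} : List α → List α → (subs dels inss : ℕ) → Prop
  | nil : EditScript [] [] 0 0 0
  | keep (a : α) {s t : List α} {S D I : ℕ} : EditScript s t S D I →
      EditScript (a :: s) (a :: t) S D I
  | sub (a b : α) {s t : List α} {S D I : ℕ} : EditScript s t S D I →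
      EditScript (a :: s) (b :: t) (S + 1) D I
  | del (a : α) {s t : List α} {S D I : ℕ} : EditScript s t S D I →
      EditScript (a :: s) t S (D + 1) I
  | ins (b : α) {s t : List α} {S D I : ℕ} : EditScript s t S D I →
      EditScript s (b :: t) S D (I + 1)

namespace EditScript

variable {α : Type*} {s t : List α} {S D I : ℕ}

theorem length_add (h : EditScript s t S D I) : s.length + I = t.length + D := by
  induction h with
  | nil => rfl
  | keep | sub | del | ins => simp only [List.length_cons]; omega

-- undoing a deletion of `s → t` inserts into `t`, and vice versa
theorem exists_split (h : EditScript s t S D I) {k d i : ℕ} (hk : k ≤ S) (hd : d ≤ D)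
    (hi : i ≤ I) : ∃ u S' D' I', EditScript s u S' D' I' ∧ EditScript t u k i d ∧
      S' + k = S ∧ D' + d = D ∧ I' + i = I := by
  induction h generalizing k d i with
  | nil =>
    obtain ⟨rfl, rfl, rfl⟩ : k = 0 ∧ d = 0 ∧ i = 0 := by omega
    exact ⟨[], 0, 0, 0, nil, nil, rfl, rfl, rfl⟩
  | keep a _ ih =>
    obtain ⟨u, S', D', I', h₁, h₂, e⟩ := ih hk hd hi
    exact ⟨a :: u, S', D', I', keep a h₁, keep a h₂, e⟩
  | sub a b _ ih =>
    rcases k with _ | k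
    · obtain ⟨u, S', D', I', h₁, h₂, e₁, e₂, e₃⟩ := ih (Nat.zero_le _) hd hi
      exact ⟨b :: u, S' + 1, D', I', sub a b h₁, keep b h₂, by omega, e₂, e₃⟩
    · obtain ⟨u, S', D', I', h₁, h₂, e₁, e₂, e₃⟩ := ih (Nat.le_of_succ_le_succ hk) hd hi
      exact ⟨a :: u, S', D', I', keep a h₁, sub b a h₂, by omega, e₂, e₃⟩
  | del a _ ih =>
    rcases d with _ | d
    · obtain ⟨u, S', D', I', h₁, h₂, e₁, e₂, e₃⟩ := ih hk (Nat.zero_le _) hi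
      exact ⟨u, S', D' + 1, I', del a h₁, h₂, e₁, by omega, e₃⟩
    · obtain ⟨u, S', D', I', h₁, h₂, e₁, e₂, e₃⟩ := ih hk (Nat.le_of_succ_le_succ hd) hi
      exact ⟨a :: u, S', D', I', keep a h₁, ins a h₂, e₁, by omega, e₃⟩
  | ins b _ ih =>
    rcases i with _ | i
    · obtain ⟨u, S', D', I', h₁, h₂, e₁, e₂, e₃⟩ := ih hk hd (Nat.zero_le _)
      exact ⟨b :: u, S', D', I' + 1, ins b h₁, keep b h₂, e₁, e₂, by omega⟩
    · obtain ⟨u, S', D', I', h₁, h₂, e₁, e₂, e₃⟩ := ih hk hd (Nat.le_of_succ_le_succ hi)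
      exact ⟨u, S', D', I', h₁, del b h₂, e₁, e₂, by omega⟩

end EditScript

section UnitCost

variable {α : Type*} [DecidableEq α]

local notation "lev" => levenshtein Levenshtein.defaultCost

theorem levenshtein_defaultCost_cons_cons (a b : α) (s t : List α) :
    lev (a :: s) (b :: t) =
      min (1 + lev s (b :: t)) (min (1 + lev (a :: s) t) ((if a = b then 0 else 1) + lev s t)) :=
  levenshtein_cons_cons _ a s b t

theorem levenshtein_nil_left (t : List α) : lev [] t = t.length := by
  induction t with
  | nil => rfl
  | cons b t ih =>
    simp only [levenshtein_nil_cons, ih, List.length_cons]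
    exact Nat.add_comm 1 _

theorem levenshtein_nil_right (s : List α) : lev s [] = s.length := by
  induction s with
  | nil => rfl
  | cons a s ih =>
    simp only [levenshtein_cons_nil, ih, List.length_cons]
    exact Nat.add_comm 1 _

theorem levenshtein_cons_left_le (a : α) (s t : List α) : lev (a :: s) t ≤ 1 + lev s t := by
  cases t with
  | nil => simp only [levenshtein_nil_right, List.length_cons]; omega
  | cons b t => rw [levenshtein_defaultCost_cons_cons]; omega

theorem levenshtein_cons_right_le (b : α) (s t : List α) : lev s (b :: t) ≤ 1 + lev s t := by
  cases s with
  | nil => simp only [levenshtein_nil_left, List.length_cons]; omega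
  | cons a s => rw [levenshtein_defaultCost_cons_cons]; omega

theorem levenshtein_cons_cons_le (a b : α) (s t : List α) :
    lev (a :: s) (b :: t) ≤ (if a = b then 0 else 1) + lev s t := by
  rw [levenshtein_defaultCost_cons_cons]; omega

theorem levenshtein_cons_self_le (a : α) (s t : List α) : lev (a :: s) (a :: t) ≤ lev s t := by
  simpa using levenshtein_cons_cons_le a a s t

theorem levenshtein_le_length_add_length (s t : List α) : lev s t ≤ s.length + t.length := by
  induction s with
  | nil => simp [levenshtein_nil_left]
  | cons a s ih =>
    have := levenshtein_cons_left_le a s t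
    simp only [List.length_cons]
    omega

theorem EditScript.levenshtein_le {s t : List α} {S D I : ℕ} (h : EditScript s t S D I) :
    lev s t ≤ S + D + I := by
  induction h with
  | nil => rfl
  | @keep a s t _ _ _ _ ih => exact (levenshtein_cons_self_le a s t).trans ih
  | @sub a b s t _ _ _ _ ih =>
    have := levenshtein_cons_cons_le a b s t
    split_ifs at this <;> omega
  | @del a s t _ _ _ _ ih => have := levenshtein_cons_left_le a s t; omega
  | @ins b s t _ _ _ _ ih => have := levenshtein_cons_right_le b s t; omega

theorem exists_editScript_cost_le (s t : List α) :
    ∃ S D I, EditScript s t S D I ∧ S + D + I ≤ lev s t := by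
  induction s generalizing t with
  | nil =>
    induction t with
    | nil => exact ⟨0, 0, 0, .nil, le_rfl⟩
    | cons b t ih =>
      obtain ⟨S, D, I, h, hc⟩ := ih
      refine ⟨S, D, I + 1, .ins b h, ?_⟩
      simp only [levenshtein_nil_left, List.length_cons] at hc ⊢
      omega
  | cons a s ihs =>
    induction t with
    | nil =>
      obtain ⟨S, D, I, h, hc⟩ := ihs []
      refine ⟨S, D + 1, I, .del a h, ?_⟩
      simp only [levenshtein_nil_right, List.length_cons] at hc ⊢
      omega
    | cons b t iht =>
      have hmin := levenshtein_defaultCost_cons_cons a b s t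
      obtain h | h | h : lev (a :: s) (b :: t) = 1 + lev s (b :: t) ∨
          lev (a :: s) (b :: t) = 1 + lev (a :: s) t ∨
          lev (a :: s) (b :: t) = (if a = b then 0 else 1) + lev s t := by omega
      · obtain ⟨S, D, I, hs, hc⟩ := ihs (b :: t)
        exact ⟨S, D + 1, I, .del a hs, by omega⟩
      · obtain ⟨S, D, I, hs, hc⟩ := iht
        exact ⟨S, D, I + 1, .ins b hs, by omega⟩
      · obtain ⟨S, D, I, hs, hc⟩ := ihs t
        by_cases hab : a = b
        · subst hab
          exact ⟨S, D, I, .keep a hs, by simp only [if_pos] at h; omega⟩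
        · exact ⟨S + 1, D, I, .sub a b hs, by simp only [hab, if_false] at h; omega⟩

theorem length_le_length_add_levenshtein (s t : List α) :
    s.length ≤ t.length + lev s t ∧ t.length ≤ s.length + lev s t := by
  obtain ⟨S, D, I, h, hc⟩ := exists_editScript_cost_le s t
  have := h.length_add
  omega

theorem levenshtein_triangle (x y z : List α) : lev x z ≤ lev x y + lev y z := by
  induction x generalizing y z with
  | nil =>
    have := (length_le_length_add_levenshtein y z).2
    simp only [levenshtein_nil_left]
    omega
  | cons a x ihx =>
    induction y generalizing z with
    | nil =>
      have := levenshtein_le_length_add_length (a :: x) z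
      simp only [levenshtein_nil_right, levenshtein_nil_left]
      omega
    | cons b y ihy =>
      induction z with
      | nil =>
        have := (length_le_length_add_levenshtein (a :: x) (b :: y)).1
        simp only [levenshtein_nil_right]
        omega
      | cons c z ihz =>
        have h₁ := ihx (b :: y) (c :: z)
        have h₂ := ihx y (c :: z)
        have h₃ := ihx y z
        have h₄ := ihy (c :: z)
        have h₅ := ihy z
        have hsub :
            (if a = c then 0 else 1) ≤ (if a = b then 0 else 1) + (if b = c then 0 else 1) := by
          split_ifs <;> simp_all
        simp only [levenshtein_defaultCost_cons_cons] at h₁ h₂ h₄ ihz ⊢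
        omega

theorem exists_levenshtein_midpoint (s t : List α) (hst : s.length = t.length) :
    ∃ u : List α, u.length = t.length ∧ lev s u ≤ lev s t - 2 ∧ lev t u ≤ 2 := by
  obtain ⟨S, D, I, h, hc⟩ := exists_editScript_cost_le s t
  have hbal := h.length_add
  -- undo one deletion and one insertion if there are any, otherwise up to two substitutions
  obtain ⟨u, S', D', I', hsu, htu, e₁, e₂, e₃⟩ :=
    h.exists_split (k := min S (2 - 2 * min D 1)) (d := min D 1) (i := min D 1)
      (by omega) (by omega) (by omega)
  have := hsu.levenshtein_le
  have := htu.levenshtein_le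
  have := htu.length_add
  exact ⟨u, by omega, by omega, by omega⟩

end UnitCost

theorem List.exists_ofFn_eq {α : Type*} {n : ℕ} (l : List α) (h : l.length = n) :
    ∃ f : Fin n → α, List.ofFn f = l := by
  subst h
  exact ⟨_, List.ofFn_getElem⟩

theorem stmt12 {α : Type*} [DecidableEq α] {n : ℕ} (r : ℕ)
    (B : Set (Fin n → α)) (hB : IsGuaranteed r r B) :
    IsGuaranteed (r + 2) (r + 2) B := by
  intro s t hst
  obtain ⟨u, hu, hsu, htu⟩ :=
    exists_levenshtein_midpoint (List.ofFn s) (List.ofFn t) (by simp only [List.length_ofFn])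
  obtain ⟨w, rfl⟩ := List.exists_ofFn_eq u (hu.trans (List.length_ofFn))
  obtain ⟨v, hvB, hsv, hwv⟩ := hB s w (by unfold editDist at hst ⊢; omega)
  have htv := levenshtein_triangle (List.ofFn t) (List.ofFn w) (List.ofFn v)
  exact ⟨v, hvB, by omega, by unfold editDist at hwv ⊢; omega⟩
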